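/- (Noncommutative Faraday equation.) Let B be a unital associative ℂ-algebra with four pairwise commuting ℂ-linear derivations ∂₀, ∂₁, ∂₂, ∂₃, let φ ∈ B and A = (A₁,A₂,A₃) be arbitrary, and let E, Bf, D, H be as defined below. Then ∇×D + ∂₀H = i[φ,Bf] − i(E×A + A×E), where ∂₀H := (∂₀H₁,∂₀H₂,∂₀H₃) and [φ,Bf] := (φBf_k − Bf_kφ)_k. In particular the noncommutative magnetic current density −j^m := i[φ,Bf] − i(E×A + A×E) is produced by every gauge potential. -/

import Mathlib

noncomputable section

namespace NC

variable {B : Type*} [Ring B] [Algebra ℂ B]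

/-- A ℂ-linear derivation of the (possibly noncommutative) ℂ-algebra `B`,
given as a plain function together with its defining properties. -/
structure IsDer (δ : B → B) : Prop where
  map_add : ∀ a b : B, δ (a + b) = δ a + δ b
  map_smul : ∀ (c : ℂ) (a : B), δ (c • a) = c • δ a
  leibniz : ∀ a b : B, δ (a * b) = δ a * b + a * δ b

/-- divergence `∇·X` of a triple. -/
def divg (d1 d2 d3 : B → B) (X : B × B × B) : B := d1 X.1 + d2 X.2.1 + d3 X.2.2

/-- curl `∇×X` of a triple. -/
def curl (d1 d2 d3 : B → B) (X : B × B × B) : B × B × B :=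
  (d2 X.2.2 - d3 X.2.1, d3 X.1 - d1 X.2.2, d1 X.2.1 - d2 X.1)

/-- gradient `∇a`. -/
def grad (d1 d2 d3 : B → B) (a : B) : B × B × B := (d1 a, d2 a, d3 a)

/-- apply a derivation componentwise to a triple, e.g. `∂₀X`. -/
def dmap (d0 : B → B) (X : B × B × B) : B × B × B := (d0 X.1, d0 X.2.1, d0 X.2.2)

/-- ordered cross product `X×Y` (multiplication from top to bottom). -/
def cross (X Y : B × B × B) : B × B × B :=
  (X.2.1 * Y.2.2 - X.2.2 * Y.2.1, X.2.2 * Y.1 - X.1 * Y.2.2, X.1 * Y.2.1 - X.2.1 * Y.1)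

/-- componentwise commutator `[a,X] = (aX_k - X_k a)_k`. -/
def commS (a : B) (X : B × B × B) : B × B × B :=
  (a * X.1 - X.1 * a, a * X.2.1 - X.2.1 * a, a * X.2.2 - X.2.2 * a)

/-- componentwise commutator `[X,a] = (X_k a - a X_k)_k`. -/
def commR (X : B × B × B) (a : B) : B × B × B :=
  (X.1 * a - a * X.1, X.2.1 * a - a * X.2.1, X.2.2 * a - a * X.2.2)

/-- scalar commutator `[X,Y] = Σ_k (X_k Y_k - Y_k X_k)`. -/
def commV (X Y : B × B × B) : B :=
  (X.1 * Y.1 - Y.1 * X.1) + (X.2.1 * Y.2.1 - Y.2.1 * X.2.1) +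
    (X.2.2 * Y.2.2 - Y.2.2 * X.2.2)

/-- classical part of the electric field: `E = -∂₀A - ∇φ`. -/
def Efield (d0 d1 d2 d3 : B → B) (φ : B) (A : B × B × B) : B × B × B :=
  -dmap d0 A - grad d1 d2 d3 φ

/-- classical part of the magnetic field: `Bf = ∇×A`. -/
def Bfield (d1 d2 d3 : B → B) (A : B × B × B) : B × B × B := curl d1 d2 d3 A

/-- the noncommutative electric field `D = E + i[φ,A]`. -/
def Dfield (d0 d1 d2 d3 : B → B) (φ : B) (A : B × B × B) : B × B × B :=
  Efield d0 d1 d2 d3 φ A + Complex.I • commS φ A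

/-- the noncommutative magnetic field `H = Bf + i(A×A)`. -/
def Hfield (d1 d2 d3 : B → B) (A : B × B × B) : B × B × B :=
  Bfield d1 d2 d3 A + Complex.I • cross A A

end NC

/-!
Split `D = E + i[φ,A]` and `H = Bf + i(A×A)`. The classical parts obey the classical Faraday law
`∇×E + ∂₀Bf = 0`, since the derivations commute. For the noncommutative parts the Leibniz rule
gives `∇×[φ,A] = [φ,∇×A] + ∇φ×A + A×∇φ` and `∂₀(A×A) = ∂₀A×A + A×∂₀A`, and because
`E = -∂₀A - ∇φ` the extra terms add up to `-(E×A + A×E)`.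
-/

namespace NC

section Ring

variable {B : Type*} [Ring B]

theorem curl_grad {d1 d2 d3 : B → B} (h12 : Function.Commute d1 d2) (h13 : Function.Commute d1 d3)
    (h23 : Function.Commute d2 d3) (a : B) : curl d1 d2 d3 (grad d1 d2 d3 a) = 0 := by
  simp only [curl, grad, h12 a, h13 a, h23 a, sub_self, Prod.mk_zero_zero]

theorem cross_neg_left (X Y : B × B × B) : cross (-X) Y = -cross X Y := by
  simp only [cross, Prod.fst_neg, Prod.snd_neg, neg_mul, Prod.neg_mk, neg_sub, neg_sub_neg]

theorem cross_neg_right (X Y : B × B × B) : cross X (-Y) = -cross X Y := by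
  simp only [cross, Prod.fst_neg, Prod.snd_neg, mul_neg, Prod.neg_mk, neg_sub, neg_sub_neg]

theorem cross_sub_left (X Y Z : B × B × B) : cross (X - Y) Z = cross X Z - cross Y Z := by
  simp only [cross, Prod.fst_sub, Prod.snd_sub, sub_mul, Prod.mk_sub_mk, Prod.mk.injEq]
  refine ⟨?_, ?_, ?_⟩ <;> abel

theorem cross_sub_right (X Y Z : B × B × B) : cross X (Y - Z) = cross X Y - cross X Z := by
  simp only [cross, Prod.fst_sub, Prod.snd_sub, mul_sub, Prod.mk_sub_mk, Prod.mk.injEq]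
  refine ⟨?_, ?_, ?_⟩ <;> abel

end Ring

section VectorCalculus

variable {B : Type*} [Ring B] [Algebra ℂ B] {δ d0 d1 d2 d3 : B → B}

theorem IsDer.map_neg (h : IsDer δ) (a : B) : δ (-a) = -δ a :=
  (AddMonoidHom.mk' δ h.map_add).map_neg a

theorem IsDer.map_sub (h : IsDer δ) (a b : B) : δ (a - b) = δ a - δ b :=
  (AddMonoidHom.mk' δ h.map_add).map_sub a b

theorem dmap_add (h : IsDer δ) (X Y : B × B × B) :
    dmap δ (X + Y) = dmap δ X + dmap δ Y := by
  simp only [dmap, Prod.fst_add, Prod.snd_add, h.map_add, Prod.mk_add_mk]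

theorem dmap_smul (h : IsDer δ) (c : ℂ) (X : B × B × B) :
    dmap δ (c • X) = c • dmap δ X := by
  simp only [dmap, Prod.smul_fst, Prod.smul_snd, h.map_smul, Prod.smul_mk]

theorem curl_add (h1 : IsDer d1) (h2 : IsDer d2) (h3 : IsDer d3) (X Y : B × B × B) :
    curl d1 d2 d3 (X + Y) = curl d1 d2 d3 X + curl d1 d2 d3 Y := by
  simp only [curl, Prod.fst_add, Prod.snd_add, h1.map_add, h2.map_add, h3.map_add,
    Prod.mk_add_mk, Prod.mk.injEq]
  refine ⟨?_, ?_, ?_⟩ <;> abel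

theorem curl_neg (h1 : IsDer d1) (h2 : IsDer d2) (h3 : IsDer d3) (X : B × B × B) :
    curl d1 d2 d3 (-X) = -curl d1 d2 d3 X := by
  simp only [curl, Prod.fst_neg, Prod.snd_neg, h1.map_neg, h2.map_neg, h3.map_neg,
    Prod.neg_mk, neg_sub, neg_sub_neg]

theorem curl_sub (h1 : IsDer d1) (h2 : IsDer d2) (h3 : IsDer d3) (X Y : B × B × B) :
    curl d1 d2 d3 (X - Y) = curl d1 d2 d3 X - curl d1 d2 d3 Y := by
  rw [sub_eq_add_neg, curl_add h1 h2 h3, curl_neg h1 h2 h3, sub_eq_add_neg]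

theorem curl_smul (h1 : IsDer d1) (h2 : IsDer d2) (h3 : IsDer d3) (c : ℂ) (X : B × B × B) :
    curl d1 d2 d3 (c • X) = c • curl d1 d2 d3 X := by
  simp only [curl, Prod.smul_fst, Prod.smul_snd, h1.map_smul, h2.map_smul, h3.map_smul,
    Prod.smul_mk, smul_sub]

theorem curl_dmap (h0 : IsDer d0) (h10 : Function.Commute d1 d0)
    (h20 : Function.Commute d2 d0) (h30 : Function.Commute d3 d0) (X : B × B × B) :
    curl d1 d2 d3 (dmap d0 X) = dmap d0 (curl d1 d2 d3 X) := by
  simp only [curl, dmap, h10 _, h20 _, h30 _, h0.map_sub]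

theorem curl_Efield_add_dmap_Bfield (h0 : IsDer d0) (h1 : IsDer d1) (h2 : IsDer d2)
    (h3 : IsDer d3) (h10 : Function.Commute d1 d0) (h20 : Function.Commute d2 d0)
    (h30 : Function.Commute d3 d0) (h12 : Function.Commute d1 d2)
    (h13 : Function.Commute d1 d3) (h23 : Function.Commute d2 d3) (φ : B) (A : B × B × B) :
    curl d1 d2 d3 (Efield d0 d1 d2 d3 φ A) + dmap d0 (Bfield d1 d2 d3 A) = 0 := by
  rw [Efield, Bfield, curl_sub h1 h2 h3, curl_neg h1 h2 h3, curl_dmap h0 h10 h20 h30,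
    curl_grad h12 h13 h23, sub_zero, neg_add_cancel]

theorem curl_commS (h1 : IsDer d1) (h2 : IsDer d2) (h3 : IsDer d3) (a : B) (X : B × B × B) :
    curl d1 d2 d3 (commS a X) =
      commS a (curl d1 d2 d3 X) + cross (grad d1 d2 d3 a) X + cross X (grad d1 d2 d3 a) := by
  simp only [curl, commS, cross, grad, h1.map_sub, h2.map_sub, h3.map_sub,
    h1.leibniz, h2.leibniz, h3.leibniz, Prod.mk_add_mk, Prod.mk.injEq]
  refine ⟨?_, ?_, ?_⟩ <;> noncomm_ring

theorem dmap_cross (h : IsDer δ) (X Y : B × B × B) :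
    dmap δ (cross X Y) = cross (dmap δ X) Y + cross X (dmap δ Y) := by
  simp only [dmap, cross, h.map_sub, h.leibniz, Prod.mk_add_mk, Prod.mk.injEq]
  refine ⟨?_, ?_, ?_⟩ <;> abel

end VectorCalculus

/-- **Noncommutative Faraday equation**: for every gauge potential `(φ,A)`,
`∇×D + ∂₀H = i[φ,Bf] - i(E×A + A×E)`; the right-hand side is the
noncommutative magnetic current density `-j^m`. -/
theorem nc_faraday_equation {B : Type*} [Ring B] [Algebra ℂ B]
    (d0 d1 d2 d3 : B → B)
    (h0 : IsDer d0) (h1 : IsDer d1) (h2 : IsDer d2) (h3 : IsDer d3)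
    (hcomm : ∀ δ ∈ [d0, d1, d2, d3], ∀ δ' ∈ [d0, d1, d2, d3], ∀ x : B,
      δ (δ' x) = δ' (δ x))
    (φ : B) (A : B × B × B) :
    curl d1 d2 d3 (Dfield d0 d1 d2 d3 φ A) + dmap d0 (Hfield d1 d2 d3 A) =
      Complex.I • commS φ (Bfield d1 d2 d3 A) -
        Complex.I • (cross (Efield d0 d1 d2 d3 φ A) A +
          cross A (Efield d0 d1 d2 d3 φ A)) := by
  have hc : ∀ δ ∈ [d0, d1, d2, d3], ∀ δ' ∈ [d0, d1, d2, d3], Function.Commute δ δ' := hcomm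
  have faraday := curl_Efield_add_dmap_Bfield h0 h1 h2 h3 (hc d1 (by simp) d0 (by simp))
    (hc d2 (by simp) d0 (by simp)) (hc d3 (by simp) d0 (by simp))
    (hc d1 (by simp) d2 (by simp)) (hc d1 (by simp) d3 (by simp))
    (hc d2 (by simp) d3 (by simp)) φ A
  have cross_Efield : cross (Efield d0 d1 d2 d3 φ A) A + cross A (Efield d0 d1 d2 d3 φ A) =
      -(cross (dmap d0 A) A + cross A (dmap d0 A)) -
        (cross (grad d1 d2 d3 φ) A + cross A (grad d1 d2 d3 φ)) := by
    rw [Efield, cross_sub_left, cross_neg_left, cross_sub_right, cross_neg_right]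
    abel
  rw [Dfield, Hfield, curl_add h1 h2 h3, curl_smul h1 h2 h3, curl_commS h1 h2 h3,
    dmap_add h0, dmap_smul h0, dmap_cross h0, cross_Efield]
  simp only [Bfield] at faraday ⊢
  linear_combination (norm := module) faraday

end NC
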